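/- Let (A^e, m, h) be the universal enveloping algebra of a DG Poisson algebra A with bracket of degree 0. Then the DG opposite algebra (A^{eop}, m, h) is the universal enveloping algebra of A_1 = (A, ·, {·,·}_1, d), where {a,b}_1 = -{a,b}. -/

import Mathlib

open TensorProduct

namespace DGPH

variable {k : Type} [Field k]

/-- The `n`-th graded piece of the induced grading on a tensor product of graded modules. -/
def tgrade {M N : Type} [AddCommGroup M] [Module k M] [AddCommGroup N] [Module k N]
    (𝒜 : ℤ → Submodule k M) (ℬ : ℤ → Submodule k N) (n : ℤ) : Submodule k (M ⊗[k] N) :=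
  ⨆ ij : {q : ℤ × ℤ // q.1 + q.2 = n},
    Submodule.span k
      (Set.image2 (fun a b => a ⊗ₜ[k] b) ((𝒜 ij.1.1 : Set M)) ((ℬ ij.1.2 : Set N)))

/-- Characterization of the Koszul-signed multiplication on a tensor product:
`(a ⊗ b)(a' ⊗ b') = (-1)^{|a'||b|} (a a') ⊗ (b b')`. -/
def KoszulMulChar {M N : Type} [AddCommGroup M] [Module k M] [AddCommGroup N] [Module k N]
    (𝒜 : ℤ → Submodule k M) (ℬ : ℤ → Submodule k N)
    (mulM : M →ₗ[k] M →ₗ[k] M) (mulN : N →ₗ[k] N →ₗ[k] N)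
    (μ : (M ⊗[k] N) →ₗ[k] (M ⊗[k] N) →ₗ[k] (M ⊗[k] N)) : Prop :=
  ∀ ⦃i j : ℤ⦄ (a : M) ⦃a' : M⦄ ⦃b : N⦄ (b' : N), a' ∈ 𝒜 i → b ∈ ℬ j →
    μ (a ⊗ₜ[k] b) (a' ⊗ₜ[k] b') = ((-1 : k) ^ (i * j)) • ((mulM a a') ⊗ₜ[k] (mulN b b'))

/-- Characterization of the Koszul-signed Poisson bracket of degree `p` on a tensor product:
`{a⊗b, a'⊗b'} = (-1)^{(|a'|+p)|b|} {a,a'} ⊗ (bb') + (-1)^{(|b|+p)|a'|} (aa') ⊗ {b,b'}`. -/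
def KoszulBracketChar {M N : Type} [AddCommGroup M] [Module k M] [AddCommGroup N] [Module k N]
    (𝒜 : ℤ → Submodule k M) (ℬ : ℤ → Submodule k N)
    (mulM : M →ₗ[k] M →ₗ[k] M) (mulN : N →ₗ[k] N →ₗ[k] N)
    (brM : M →ₗ[k] M →ₗ[k] M) (brN : N →ₗ[k] N →ₗ[k] N) (p : ℤ)
    (β : (M ⊗[k] N) →ₗ[k] (M ⊗[k] N) →ₗ[k] (M ⊗[k] N)) : Prop :=
  ∀ ⦃i j : ℤ⦄ (a : M) ⦃a' : M⦄ ⦃b : N⦄ (b' : N), a' ∈ 𝒜 i → b ∈ ℬ j →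
    β (a ⊗ₜ[k] b) (a' ⊗ₜ[k] b') =
      ((-1 : k) ^ ((i + p) * j)) • ((brM a a') ⊗ₜ[k] (mulN b b')) +
      ((-1 : k) ^ ((j + p) * i)) • ((mulM a a') ⊗ₜ[k] (brN b b'))

/-- Characterization of the Koszul-signed differential on a tensor product:
`d(a ⊗ b) = d a ⊗ b + (-1)^{|a|} a ⊗ d b`. -/
def KoszulDiffChar {M N : Type} [AddCommGroup M] [Module k M] [AddCommGroup N] [Module k N]
    (𝒜 : ℤ → Submodule k M) (dM : M →ₗ[k] M) (dN : N →ₗ[k] N)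
    (D : M ⊗[k] N →ₗ[k] M ⊗[k] N) : Prop :=
  ∀ ⦃i : ℤ⦄ ⦃a : M⦄ (b : N), a ∈ 𝒜 i →
    D (a ⊗ₜ[k] b) = (dM a) ⊗ₜ[k] b + ((-1 : k) ^ i) • (a ⊗ₜ[k] (dN b))

/-- Characterization of the Koszul twist `T(a ⊗ b) = (-1)^{|a||b|} b ⊗ a`. -/
def KoszulTwistChar {M N : Type} [AddCommGroup M] [Module k M] [AddCommGroup N] [Module k N]
    (𝒜 : ℤ → Submodule k M) (ℬ : ℤ → Submodule k N)
    (T : M ⊗[k] N →ₗ[k] N ⊗[k] M) : Prop :=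
  ∀ ⦃i j : ℤ⦄ ⦃a : M⦄ ⦃b : N⦄, a ∈ 𝒜 i → b ∈ ℬ j →
    T (a ⊗ₜ[k] b) = ((-1 : k) ^ (i * j)) • (b ⊗ₜ[k] a)

section Structures

variable (k)
variable (M : Type) [AddCommGroup M] [Module k M]

/-- A `ℤ`-graded associative unital algebra, given by unbundled data. -/
structure IsGradedAlgebra (𝒜 : ℤ → Submodule k M) (mul : M →ₗ[k] M →ₗ[k] M) (one : M) :
    Prop where
  indep : iSupIndep 𝒜
  total : (⨆ i, 𝒜 i) = ⊤
  mul_mem : ∀ ⦃i j : ℤ⦄ ⦃a b : M⦄, a ∈ 𝒜 i → b ∈ 𝒜 j → mul a b ∈ 𝒜 (i + j)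
  one_mem : one ∈ 𝒜 0
  mul_assoc : ∀ a b c : M, mul (mul a b) c = mul a (mul b c)
  one_mul : ∀ a : M, mul one a = a
  mul_one : ∀ a : M, mul a one = a

/-- A differential graded algebra. -/
structure IsDGAlgebra (𝒜 : ℤ → Submodule k M) (mul : M →ₗ[k] M →ₗ[k] M) (one : M)
    (d : M →ₗ[k] M) extends IsGradedAlgebra k M 𝒜 mul one : Prop where
  d_mem : ∀ ⦃i : ℤ⦄ ⦃a : M⦄, a ∈ 𝒜 i → d a ∈ 𝒜 (i + 1)
  d_sq : ∀ a : M, d (d a) = 0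
  d_mul : ∀ ⦃i : ℤ⦄ ⦃a : M⦄ (b : M), a ∈ 𝒜 i →
    d (mul a b) = mul (d a) b + ((-1 : k) ^ i) • mul a (d b)

/-- A differential graded Poisson algebra with Poisson bracket of degree `p`. -/
structure IsDGPoisson (𝒜 : ℤ → Submodule k M) (mul : M →ₗ[k] M →ₗ[k] M) (one : M)
    (bracket : M →ₗ[k] M →ₗ[k] M) (d : M →ₗ[k] M) (p : ℤ)
    extends IsDGAlgebra k M 𝒜 mul one d : Prop where
  gcomm : ∀ ⦃i j : ℤ⦄ ⦃a b : M⦄, a ∈ 𝒜 i → b ∈ 𝒜 j →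
    mul a b = ((-1 : k) ^ (i * j)) • mul b a
  bracket_mem : ∀ ⦃i j : ℤ⦄ ⦃a b : M⦄, a ∈ 𝒜 i → b ∈ 𝒜 j → bracket a b ∈ 𝒜 (i + j + p)
  bracket_antisymm : ∀ ⦃i j : ℤ⦄ ⦃a b : M⦄, a ∈ 𝒜 i → b ∈ 𝒜 j →
    bracket a b = -(((-1 : k) ^ ((i + p) * (j + p))) • bracket b a)
  bracket_jacobi : ∀ ⦃i j : ℤ⦄ ⦃a b : M⦄ (c : M), a ∈ 𝒜 i → b ∈ 𝒜 j →
    bracket a (bracket b c) =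
      bracket (bracket a b) c + ((-1 : k) ^ ((i + p) * (j + p))) • bracket b (bracket a c)
  bracket_leibniz : ∀ ⦃i j : ℤ⦄ ⦃a b : M⦄ (c : M), a ∈ 𝒜 i → b ∈ 𝒜 j →
    bracket a (mul b c) =
      mul (bracket a b) c + ((-1 : k) ^ ((i + p) * j)) • mul b (bracket a c)
  d_bracket : ∀ ⦃i : ℤ⦄ ⦃a : M⦄ (b : M), a ∈ 𝒜 i →
    d (bracket a b) = bracket (d a) b + ((-1 : k) ^ (i + p)) • bracket a (d b)

/-- A `ℤ`-graded coalgebra, given by unbundled data. -/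
structure IsGradedCoalgebra (𝒜 : ℤ → Submodule k M) (comul : M →ₗ[k] M ⊗[k] M)
    (counit : M →ₗ[k] k) : Prop where
  comul_mem : ∀ ⦃i : ℤ⦄ ⦃a : M⦄, a ∈ 𝒜 i → comul a ∈ tgrade 𝒜 𝒜 i
  counit_zero : ∀ ⦃i : ℤ⦄ ⦃a : M⦄, a ∈ 𝒜 i → i ≠ 0 → counit a = 0
  coassoc : ∀ a : M,
    (TensorProduct.assoc k M M M) ((TensorProduct.map comul LinearMap.id) (comul a)) =
      (TensorProduct.map LinearMap.id comul) (comul a)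
  counit_comul_left : ∀ a : M,
    (TensorProduct.lid k M) ((TensorProduct.map counit LinearMap.id) (comul a)) = a
  counit_comul_right : ∀ a : M,
    (TensorProduct.rid k M) ((TensorProduct.map LinearMap.id counit) (comul a)) = a

/-- A `ℤ`-graded bialgebra (comultiplication is an algebra map for the Koszul-signed
multiplication on the tensor square). -/
structure IsGradedBialgebra (𝒜 : ℤ → Submodule k M) (mul : M →ₗ[k] M →ₗ[k] M) (one : M)
    (comul : M →ₗ[k] M ⊗[k] M) (counit : M →ₗ[k] k) : Prop where
  alg : IsGradedAlgebra k M 𝒜 mul one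
  coalg : IsGradedCoalgebra k M 𝒜 comul counit
  comul_one : comul one = one ⊗ₜ[k] one
  counit_one : counit one = 1
  counit_mul : ∀ a b : M, counit (mul a b) = counit a * counit b
  comul_mul : ∃ mul₂ : (M ⊗[k] M) →ₗ[k] (M ⊗[k] M) →ₗ[k] (M ⊗[k] M),
    KoszulMulChar 𝒜 𝒜 mul mul mul₂ ∧
      ∀ a b : M, comul (mul a b) = mul₂ (comul a) (comul b)

/-- A `ℤ`-graded Hopf algebra. -/
structure IsGradedHopf (𝒜 : ℤ → Submodule k M) (mul : M →ₗ[k] M →ₗ[k] M) (one : M)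
    (comul : M →ₗ[k] M ⊗[k] M) (counit : M →ₗ[k] k) (S : M →ₗ[k] M) : Prop where
  bialg : IsGradedBialgebra k M 𝒜 mul one comul counit
  antipode_mem : ∀ ⦃i : ℤ⦄ ⦃a : M⦄, a ∈ 𝒜 i → S a ∈ 𝒜 i
  antipode_left : ∀ a : M,
    TensorProduct.lift mul ((TensorProduct.map S LinearMap.id) (comul a)) = counit a • one
  antipode_right : ∀ a : M,
    TensorProduct.lift mul ((TensorProduct.map LinearMap.id S) (comul a)) = counit a • one

/-- `d` is a coderivation (with Koszul signs) and `ε ∘ d = 0`. -/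
def CoderivationProp (𝒜 : ℤ → Submodule k M) (comul : M →ₗ[k] M ⊗[k] M)
    (counit : M →ₗ[k] k) (d : M →ₗ[k] M) : Prop :=
  (∀ a : M, counit (d a) = 0) ∧
  ∃ D : M ⊗[k] M →ₗ[k] M ⊗[k] M, KoszulDiffChar 𝒜 d d D ∧
    ∀ a : M, comul (d a) = D (comul a)

/-- A differential graded bialgebra. -/
structure IsDGBialgebra (𝒜 : ℤ → Submodule k M) (mul : M →ₗ[k] M →ₗ[k] M) (one : M)
    (comul : M →ₗ[k] M ⊗[k] M) (counit : M →ₗ[k] k) (d : M →ₗ[k] M) : Prop where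
  bialg : IsGradedBialgebra k M 𝒜 mul one comul counit
  dga : IsDGAlgebra k M 𝒜 mul one d
  coderiv : CoderivationProp k M 𝒜 comul counit d

/-- A differential graded Hopf algebra. -/
structure IsDGHopf (𝒜 : ℤ → Submodule k M) (mul : M →ₗ[k] M →ₗ[k] M) (one : M)
    (comul : M →ₗ[k] M ⊗[k] M) (counit : M →ₗ[k] k) (d : M →ₗ[k] M) (S : M →ₗ[k] M) :
    Prop where
  dgbialg : IsDGBialgebra k M 𝒜 mul one comul counit d
  antipode_mem : ∀ ⦃i : ℤ⦄ ⦃a : M⦄, a ∈ 𝒜 i → S a ∈ 𝒜 i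
  antipode_left : ∀ a : M,
    TensorProduct.lift mul ((TensorProduct.map S LinearMap.id) (comul a)) = counit a • one
  antipode_right : ∀ a : M,
    TensorProduct.lift mul ((TensorProduct.map LinearMap.id S) (comul a)) = counit a • one

/-- A differential graded Poisson bialgebra (bracket of degree 0). -/
structure IsDGPoissonBialgebra (𝒜 : ℤ → Submodule k M) (mul : M →ₗ[k] M →ₗ[k] M) (one : M)
    (bracket : M →ₗ[k] M →ₗ[k] M) (d : M →ₗ[k] M)
    (comul : M →ₗ[k] M ⊗[k] M) (counit : M →ₗ[k] k) : Prop where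
  poisson : IsDGPoisson k M 𝒜 mul one bracket d 0
  dgbialg : IsDGBialgebra k M 𝒜 mul one comul counit d
  comul_bracket : ∃ br₂ : (M ⊗[k] M) →ₗ[k] (M ⊗[k] M) →ₗ[k] (M ⊗[k] M),
    KoszulBracketChar 𝒜 𝒜 mul mul bracket bracket 0 br₂ ∧
      ∀ a b : M, comul (bracket a b) = br₂ (comul a) (comul b)

/-- A differential graded Poisson Hopf algebra (bracket of degree 0). -/
structure IsDGPoissonHopf (𝒜 : ℤ → Submodule k M) (mul : M →ₗ[k] M →ₗ[k] M) (one : M)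
    (bracket : M →ₗ[k] M →ₗ[k] M) (d : M →ₗ[k] M)
    (comul : M →ₗ[k] M ⊗[k] M) (counit : M →ₗ[k] k) (S : M →ₗ[k] M) : Prop where
  toPoissonBialg : IsDGPoissonBialgebra k M 𝒜 mul one bracket d comul counit
  antipode_mem : ∀ ⦃i : ℤ⦄ ⦃a : M⦄, a ∈ 𝒜 i → S a ∈ 𝒜 i
  antipode_left : ∀ a : M,
    TensorProduct.lift mul ((TensorProduct.map S LinearMap.id) (comul a)) = counit a • one
  antipode_right : ∀ a : M,
    TensorProduct.lift mul ((TensorProduct.map LinearMap.id S) (comul a)) = counit a • one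

end Structures

/-- A homomorphism of differential graded algebras (unbundled data). -/
structure IsDGAlgHom {M N : Type} [AddCommGroup M] [Module k M] [AddCommGroup N] [Module k N]
    (𝒜 : ℤ → Submodule k M) (mulM : M →ₗ[k] M →ₗ[k] M) (oneM : M) (dM : M →ₗ[k] M)
    (ℬ : ℤ → Submodule k N) (mulN : N →ₗ[k] N →ₗ[k] N) (oneN : N) (dN : N →ₗ[k] N)
    (f : M →ₗ[k] N) : Prop where
  map_mem : ∀ ⦃i : ℤ⦄ ⦃a : M⦄, a ∈ 𝒜 i → f a ∈ ℬ i
  map_one : f oneM = oneN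
  map_mul : ∀ a b : M, f (mulM a b) = mulN (f a) (f b)
  map_d : ∀ a : M, f (dM a) = dN (f a)

/-- A homomorphism of differential graded Poisson algebras. -/
structure IsDGPoissonHom {M N : Type} [AddCommGroup M] [Module k M] [AddCommGroup N] [Module k N]
    (𝒜 : ℤ → Submodule k M) (mulM : M →ₗ[k] M →ₗ[k] M) (oneM : M)
    (brM : M →ₗ[k] M →ₗ[k] M) (dM : M →ₗ[k] M)
    (ℬ : ℤ → Submodule k N) (mulN : N →ₗ[k] N →ₗ[k] N) (oneN : N)
    (brN : N →ₗ[k] N →ₗ[k] N) (dN : N →ₗ[k] N)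
    (f : M →ₗ[k] N)
    extends IsDGAlgHom 𝒜 mulM oneM dM ℬ mulN oneN dN f : Prop where
  map_bracket : ∀ a b : M, f (brM a b) = brN (f a) (f b)

/-- `(E, m, h)` is the universal enveloping algebra of the DG Poisson algebra
`(A, 𝒜, mulA, oneA, brA, dA)` with bracket of degree `p`. -/
structure IsUEA {A E : Type} [AddCommGroup A] [Module k A] [AddCommGroup E] [Module k E]
    (𝒜 : ℤ → Submodule k A) (mulA : A →ₗ[k] A →ₗ[k] A) (oneA : A)
    (brA : A →ₗ[k] A →ₗ[k] A) (dA : A →ₗ[k] A) (p : ℤ)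
    (ℰ : ℤ → Submodule k E) (mulE : E →ₗ[k] E →ₗ[k] E) (oneE : E) (dE : E →ₗ[k] E)
    (m h : A →ₗ[k] E) : Prop where
  dga : IsDGAlgebra k E ℰ mulE oneE dE
  m_hom : IsDGAlgHom 𝒜 mulA oneA dA ℰ mulE oneE dE m
  h_mem : ∀ ⦃i : ℤ⦄ ⦃a : A⦄, a ∈ 𝒜 i → h a ∈ ℰ (i + p)
  h_d : ∀ a : A, h (dA a) = dE (h a)
  h_lie : ∀ ⦃i j : ℤ⦄ ⦃a b : A⦄, a ∈ 𝒜 i → b ∈ 𝒜 j →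
    h (brA a b) = mulE (h a) (h b) - ((-1 : k) ^ ((i + p) * (j + p))) • mulE (h b) (h a)
  m_bracket : ∀ ⦃i j : ℤ⦄ ⦃a b : A⦄, a ∈ 𝒜 i → b ∈ 𝒜 j →
    m (brA a b) = mulE (h a) (m b) - ((-1 : k) ^ ((i + p) * j)) • mulE (m b) (h a)
  h_mul : ∀ ⦃i j : ℤ⦄ ⦃a b : A⦄, a ∈ 𝒜 i → b ∈ 𝒜 j →
    h (mulA a b) = mulE (m a) (h b) + ((-1 : k) ^ (i * j)) • mulE (m b) (h a)
  universal : ∀ (D : Type) [AddCommGroup D] [Module k D]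
    (𝒟 : ℤ → Submodule k D) (mulD : D →ₗ[k] D →ₗ[k] D) (oneD : D) (dD : D →ₗ[k] D)
    (f g : A →ₗ[k] D),
    IsDGAlgebra k D 𝒟 mulD oneD dD →
    IsDGAlgHom 𝒜 mulA oneA dA 𝒟 mulD oneD dD f →
    (∀ ⦃i : ℤ⦄ ⦃a : A⦄, a ∈ 𝒜 i → g a ∈ 𝒟 (i + p)) →
    (∀ a : A, g (dA a) = dD (g a)) →
    (∀ ⦃i j : ℤ⦄ ⦃a b : A⦄, a ∈ 𝒜 i → b ∈ 𝒜 j →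
      g (brA a b) = mulD (g a) (g b) - ((-1 : k) ^ ((i + p) * (j + p))) • mulD (g b) (g a)) →
    (∀ ⦃i j : ℤ⦄ ⦃a b : A⦄, a ∈ 𝒜 i → b ∈ 𝒜 j →
      f (brA a b) = mulD (g a) (f b) - ((-1 : k) ^ ((i + p) * j)) • mulD (f b) (g a)) →
    (∀ ⦃i j : ℤ⦄ ⦃a b : A⦄, a ∈ 𝒜 i → b ∈ 𝒜 j →
      g (mulA a b) = mulD (f a) (g b) + ((-1 : k) ^ (i * j)) • mulD (f b) (g a)) →
    ∃! φ : E →ₗ[k] D, IsDGAlgHom ℰ mulE oneE dE 𝒟 mulD oneD dD φ ∧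
      φ ∘ₗ m = f ∧ φ ∘ₗ h = g

end DGPH

/-!
The Koszul opposite multiplication `u ∘ v = (-1)^{|u||v|} v u` is built degreewise from the
grading, and `E^op` is again a DG algebra. The graded commutator in `E^op` is minus the one in `E`,
which turns the relations for `{·,·}` into those for `-{·,·}`; the relation for `h (a b)` in `E^op`
follows from the one in `E`, the relation for `m {a, b}` and graded antisymmetry of the bracket
(this step needs the bracket degree to be even). As `A` is graded commutative, `mulA` is its own
opposite, so `m` stays a DG algebra map into `E^op`. Finally, a map is a DG algebra map `E → D^op`
exactly when it is one `E^op → D`, so the universal property of `(E, m, h)` applied to `D^op` gives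
the one of `(E^op, m, h)` for `D`.
-/

namespace DGPH

section Signs

variable {k : Type} [Field k]

theorem neg_one_zpow_congr {m n : ℤ} (h : Even (m - n)) : (-1 : k) ^ m = (-1 : k) ^ n := by
  rw [← sub_add_cancel m n, zpow_add₀ (by norm_num), h.neg_one_zpow, one_mul]

variable {M : Type} [AddCommGroup M] [Module k M]

theorem neg_one_zpow_smul_smul (m n : ℤ) (x : M) :
    (-1 : k) ^ m • (-1 : k) ^ n • x = (-1 : k) ^ (m + n) • x := by
  rw [smul_smul, zpow_add₀ (by norm_num)]

theorem neg_one_zpow_mul_smul_swap (i j : ℤ) (x : M) :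
    (-1 : k) ^ (i * j) • (-1 : k) ^ (j * i) • x = x := by
  rw [neg_one_zpow_smul_smul, Even.neg_one_zpow ⟨i * j, by ring⟩, one_smul]

end Signs

section Homogeneous

variable {ι R M N P : Type} [CommSemiring R] [AddCommMonoid M] [Module R M] [AddCommMonoid N]
  [Module R N] [AddCommMonoid P] [Module R P] {ℳ : ι → Submodule R M} {𝒩 : ι → Submodule R N}

theorem linearMap_ext_of_iSup_eq_top (hℳ : ⨆ i, ℳ i = ⊤) {f g : M →ₗ[R] P}
    (h : ∀ i, ∀ x ∈ ℳ i, f x = g x) : f = g :=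
  LinearMap.ext_on (Submodule.iSup_eq_span ℳ ▸ hℳ) fun x hx => by
    obtain ⟨i, hi⟩ := Set.mem_iUnion.mp hx
    exact h i x hi

theorem linearMap_ext₂_of_iSup_eq_top (hℳ : ⨆ i, ℳ i = ⊤) (h𝒩 : ⨆ i, 𝒩 i = ⊤)
    {B₁ B₂ : M →ₗ[R] N →ₗ[R] P} (h : ∀ i j, ∀ x ∈ ℳ i, ∀ y ∈ 𝒩 j, B₁ x y = B₂ x y) : B₁ = B₂ :=
  linearMap_ext_of_iSup_eq_top hℳ fun i x hx =>
    linearMap_ext_of_iSup_eq_top h𝒩 fun j y hy => h i j x hx y hy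

end Homogeneous

variable {k : Type} [Field k]

def IsOpMul {E : Type} [AddCommGroup E] [Module k E] (ℰ : ℤ → Submodule k E)
    (mul mulOp : E →ₗ[k] E →ₗ[k] E) : Prop :=
  ∀ ⦃i j : ℤ⦄ ⦃u v : E⦄, u ∈ ℰ i → v ∈ ℰ j → mulOp u v = ((-1 : k) ^ (i * j)) • mul v u

section Opposite

variable {E : Type} [AddCommGroup E] [Module k E] {ℰ : ℤ → Submodule k E}
  {mul mulOp : E →ₗ[k] E →ₗ[k] E}

theorem IsOpMul.symm (hop : IsOpMul ℰ mul mulOp) : IsOpMul ℰ mulOp mul := by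
  intro i j u v hu hv
  rw [hop hv hu, neg_one_zpow_mul_smul_swap]

open DirectSum in
theorem exists_isOpMul (hind : iSupIndep ℰ) (htot : ⨆ i, ℰ i = ⊤) (mul : E →ₗ[k] E →ₗ[k] E) :
    ∃ mulOp, IsOpMul ℰ mul mulOp := by
  let e : (⨁ i, ℰ i) ≃ₗ[k] E := LinearEquiv.ofBijective (coeLinearMap ℰ)
    (isInternal_submodule_of_iSupIndep_of_iSup_eq_top hind htot)
  let B : (⨁ i, ℰ i) →ₗ[k] (⨁ j, ℰ j) →ₗ[k] E := toModule k ℤ _ fun i =>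
    (toModule k ℤ _ fun j =>
      ((-1 : k) ^ (i * j) • mul.flip.compl₁₂ (ℰ i).subtype (ℰ j).subtype).flip).flip
  have he : ∀ {i u} (hu : u ∈ ℰ i), e.symm u = lof k ℤ (fun i => ℰ i) i ⟨u, hu⟩ :=
    fun hu => e.symm_apply_eq.mpr (coeLinearMap_of ℰ _ ⟨_, hu⟩).symm
  refine ⟨B.compl₁₂ e.symm.toLinearMap e.symm.toLinearMap, fun i j u v hu hv => ?_⟩
  simp [B, he hu, he hv, toModule_lof]

variable {one : E} {d : E →ₗ[k] E}

theorem IsDGAlgebra.op (hA : IsDGAlgebra k E ℰ mul one d) (hop : IsOpMul ℰ mul mulOp) :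
    IsDGAlgebra k E ℰ mulOp one d where
  indep := hA.indep
  total := hA.total
  mul_mem {i j _ _} ha hb := by
    rw [hop ha hb]
    exact Submodule.smul_mem _ _ (add_comm j i ▸ hA.mul_mem hb ha)
  one_mem := hA.one_mem
  mul_assoc a b c := by
    have key : mulOp.compr₂ mulOp = (LinearMap.llcomp k E E E).compl₁₂ mulOp mulOp :=
      linearMap_ext₂_of_iSup_eq_top hA.total hA.total fun i j a ha b hb =>
        linearMap_ext_of_iSup_eq_top hA.total fun l c hc => by
          have hba : mul b a ∈ ℰ (i + j) := add_comm j i ▸ hA.mul_mem hb ha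
          have hcb : mul c b ∈ ℰ (j + l) := add_comm l j ▸ hA.mul_mem hc hb
          simp only [LinearMap.compr₂_apply, LinearMap.compl₁₂_apply, LinearMap.llcomp_apply]
          rw [hop ha hb, hop hb hc, map_smul, LinearMap.smul_apply, map_smul, hop hba hc,
            hop ha hcb, neg_one_zpow_smul_smul, neg_one_zpow_smul_smul, hA.mul_assoc c b a,
            show i * j + (i + j) * l = j * l + i * (j + l) by ring]
    exact LinearMap.congr_fun (LinearMap.congr_fun₂ key a b) c
  one_mul a := by
    have key : mulOp one = LinearMap.id := linearMap_ext_of_iSup_eq_top hA.total fun i a ha => by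
      rw [LinearMap.id_apply, hop hA.one_mem ha, zero_mul, zpow_zero, one_smul, hA.mul_one]
    exact LinearMap.congr_fun key a
  mul_one a := by
    have key : mulOp.flip one = LinearMap.id :=
      linearMap_ext_of_iSup_eq_top hA.total fun i a ha => by
        rw [LinearMap.flip_apply, LinearMap.id_apply, hop ha hA.one_mem, mul_zero, zpow_zero,
          one_smul, hA.one_mul]
    exact LinearMap.congr_fun key a
  d_mem := hA.d_mem
  d_sq := hA.d_sq
  d_mul {i a} b ha := by
    have key : d ∘ₗ mulOp a = mulOp (d a) + (-1 : k) ^ i • (mulOp a ∘ₗ d) :=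
      linearMap_ext_of_iSup_eq_top hA.total fun j b hb => by
        simp only [LinearMap.comp_apply, LinearMap.add_apply, LinearMap.smul_apply]
        rw [hop ha hb, map_smul, hA.d_mul a hb, hop (hA.d_mem ha) hb, hop ha (hA.d_mem hb),
          smul_add, neg_one_zpow_smul_smul, neg_one_zpow_smul_smul, add_comm,
          show i * j + j = (i + 1) * j by ring,
          neg_one_zpow_congr (m := i + i * (j + 1)) (n := i * j) ⟨i, by ring⟩]
    exact LinearMap.congr_fun key b

end Opposite

theorem IsDGAlgHom.op {M N : Type} [AddCommGroup M] [Module k M] [AddCommGroup N] [Module k N]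
    {ℳ : ℤ → Submodule k M} {mulM opM : M →ₗ[k] M →ₗ[k] M} {oneM : M} {dM : M →ₗ[k] M}
    {𝒩 : ℤ → Submodule k N} {mulN opN : N →ₗ[k] N →ₗ[k] N} {oneN : N} {dN : N →ₗ[k] N}
    {φ : M →ₗ[k] N} (hφ : IsDGAlgHom ℳ mulM oneM dM 𝒩 mulN oneN dN φ) (hℳ : ⨆ i, ℳ i = ⊤)
    (hopM : IsOpMul ℳ mulM opM) (hopN : IsOpMul 𝒩 mulN opN) :
    IsDGAlgHom ℳ opM oneM dM 𝒩 opN oneN dN φ where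
  map_mem := hφ.map_mem
  map_one := hφ.map_one
  map_mul a b := by
    have key : opM.compr₂ φ = opN.compl₁₂ φ φ :=
      linearMap_ext₂_of_iSup_eq_top hℳ hℳ fun i j a ha b hb => by
        simp only [LinearMap.compr₂_apply, LinearMap.compl₁₂_apply]
        rw [hopM ha hb, map_smul, hφ.map_mul, hopN (hφ.map_mem ha) (hφ.map_mem hb)]
    exact LinearMap.congr_fun₂ key a b
  map_d := hφ.map_d

section Relations

variable {A D : Type} [AddCommGroup A] [Module k A] [AddCommGroup D] [Module k D]
  {𝒟 : ℤ → Submodule k D} {mul mulOp : D →ₗ[k] D →ₗ[k] D} {br : A →ₗ[k] A →ₗ[k] A}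

theorem IsOpMul.map_neg_bracket_iff (hop : IsOpMul 𝒟 mul mulOp) {x : D} {y : A →ₗ[k] D}
    {a b : A} {i j : ℤ} (hx : x ∈ 𝒟 i) (hy : y b ∈ 𝒟 j) :
    y ((-br) a b) = mulOp x (y b) - (-1 : k) ^ (i * j) • mulOp (y b) x ↔
      y (br a b) = mul x (y b) - (-1 : k) ^ (i * j) • mul (y b) x := by
  rw [LinearMap.neg_apply, LinearMap.neg_apply, map_neg, hop hx hy, hop hy hx,
    neg_one_zpow_mul_smul_swap, neg_eq_iff_eq_neg, neg_sub]

theorem IsOpMul.mul_add_smul_mul_eq {f g : A →ₗ[k] D} {a b : A} {i j p : ℤ} (hp : Even p)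
    (hop : IsOpMul 𝒟 mul mulOp) (hfa : f a ∈ 𝒟 i) (hfb : f b ∈ 𝒟 j)
    (hga : g a ∈ 𝒟 (i + p)) (hgb : g b ∈ 𝒟 (j + p))
    (hanti : br a b = -((-1 : k) ^ ((i + p) * (j + p)) • br b a))
    (hfab : f (br a b) = mul (g a) (f b) - (-1 : k) ^ ((i + p) * j) • mul (f b) (g a))
    (hfba : f (br b a) = mul (g b) (f a) - (-1 : k) ^ ((j + p) * i) • mul (f a) (g b)) :
    mul (f a) (g b) + (-1 : k) ^ (i * j) • mul (f b) (g a) =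
      mulOp (f a) (g b) + (-1 : k) ^ (i * j) • mulOp (f b) (g a) := by
  rw [hanti, map_neg, map_smul] at hfab
  rw [hop hfa hgb, hop hfb hga, eq_add_of_sub_eq hfab.symm, eq_add_of_sub_eq hfba.symm]
  simp only [smul_add, smul_neg, neg_one_zpow_smul_smul]
  have e₁ : (-1 : k) ^ (i * (j + p) + (j + p) * i) = 1 := Even.neg_one_zpow ⟨i * (j + p), by ring⟩
  have e₂ : (-1 : k) ^ (i * j + (j * (i + p) + (i + p) * (j + p))) = (-1) ^ (i * (j + p)) := by
    obtain ⟨q, rfl⟩ := hp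
    exact neg_one_zpow_congr ⟨i * j + j * (q + q) + 2 * q * q, by ring⟩
  have e₃ : (-1 : k) ^ (i * j + (j * (i + p) + (i + p) * j)) = (-1) ^ (i * j) :=
    neg_one_zpow_congr ⟨i * j + j * p, by ring⟩
  rw [e₁, e₂, e₃, one_smul]
  abel

end Relations

/-- If `(E, m, h)` is the universal enveloping algebra of a DG Poisson
algebra `A` with bracket of degree 0, then the DG opposite algebra `(E^{op}, m, h)` (with
Koszul-signed opposite multiplication) is the universal enveloping algebra of
`A₁ = (A, ·, -{·,·}, d)`. -/
theorem op_isUEA {k : Type} [Field k]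
    (A E : Type) [AddCommGroup A] [Module k A] [AddCommGroup E] [Module k E]
    (𝒜 : ℤ → Submodule k A) (mulA : A →ₗ[k] A →ₗ[k] A) (oneA : A)
    (brA : A →ₗ[k] A →ₗ[k] A) (dA : A →ₗ[k] A)
    (ℰ : ℤ → Submodule k E) (mulE : E →ₗ[k] E →ₗ[k] E) (oneE : E) (dE : E →ₗ[k] E)
    (m h : A →ₗ[k] E)
    (hP : IsDGPoisson k A 𝒜 mulA oneA brA dA 0)
    (hU : IsUEA 𝒜 mulA oneA brA dA 0 ℰ mulE oneE dE m h) :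
    ∃ mulOp : E →ₗ[k] E →ₗ[k] E,
      (∀ ⦃i j : ℤ⦄ ⦃u v : E⦄, u ∈ ℰ i → v ∈ ℰ j →
        mulOp u v = ((-1 : k) ^ (i * j)) • mulE v u) ∧
      IsUEA 𝒜 mulA oneA (-brA) dA 0 ℰ mulOp oneE dE m h := by
  obtain ⟨mulOp, hop⟩ := exists_isOpMul hU.dga.indep hU.dga.total mulE
  refine ⟨mulOp, hop, hU.dga.op hop, hU.m_hom.op hP.total hP.gcomm hop, hU.h_mem, hU.h_d,
    fun _ _ _ _ ha hb =>
      (hop.map_neg_bracket_iff (hU.h_mem ha) (hU.h_mem hb)).mpr (hU.h_lie ha hb),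
    fun _ _ _ _ ha hb =>
      (hop.map_neg_bracket_iff (hU.h_mem ha) (hU.m_hom.map_mem hb)).mpr (hU.m_bracket ha hb),
    fun _ _ _ _ ha hb => (hU.h_mul ha hb).trans <| hop.mul_add_smul_mul_eq Even.zero
      (hU.m_hom.map_mem ha) (hU.m_hom.map_mem hb) (hU.h_mem ha) (hU.h_mem hb)
      (hP.bracket_antisymm ha hb) (hU.m_bracket ha hb) (hU.m_bracket hb ha),
    fun D _ _ 𝒟 mulD oneD dD f g hD hf hg hgd hglie hfbr hgmul => ?_⟩
  obtain ⟨mulDop, hDop⟩ := exists_isOpMul hD.indep hD.total mulD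
  obtain ⟨φ, ⟨hφ, hφm, hφh⟩, huniq⟩ := hU.universal D 𝒟 mulDop oneD dD f g (hD.op hDop)
    (hf.op hP.total hP.gcomm hDop) hg hgd
    (fun _ _ _ _ ha hb => (hDop.symm.map_neg_bracket_iff (hg ha) (hg hb)).mp (hglie ha hb))
    (fun _ _ _ _ ha hb => (hDop.symm.map_neg_bracket_iff (hg ha) (hf.map_mem hb)).mp (hfbr ha hb))
    (fun _ _ _ _ ha hb => (hgmul ha hb).trans <| hDop.mul_add_smul_mul_eq Even.zero
      (hf.map_mem ha) (hf.map_mem hb) (hg ha) (hg hb) (by simp [hP.bracket_antisymm ha hb])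
      (hfbr ha hb) (hfbr hb ha))
  exact ⟨φ, ⟨hφ.op hU.dga.total hop hDop.symm, hφm, hφh⟩,
    fun ψ ⟨hψ, hψm, hψh⟩ => huniq ψ ⟨hψ.op hU.dga.total hop.symm hDop, hψm, hψh⟩⟩

end DGPH
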